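/- arXiv:1511.00224 — 2 statements merged into one kernel-verified Lean document; each statement's English description precedes it below -/
import Mathlib

section
/- For every integer s ≥ 5, every real γ₁ ≥ 1, and the geometric distribution p_k = θ(1−θ)^k whose parameter θ ∈ (0,1) satisfies θ < 2·cos(2π/5), there exists a nonzero REAL sequence z ∈ D(A^{s−1}) ∩ ℝ^ℕ with B_s z = 0; in particular B_s is not injective on D(A^{s−1}) ∩ ℝ^ℕ. -/
/-!
For the geometric distribution, `A` acts diagonally on geometric sequences: if `‖w‖ < 1` then
`A (l ↦ (w / (1 - θ)) ^ l) = θ / (1 - w) • (l ↦ (w / (1 - θ)) ^ l)`. Solving `θ / (1 - w) = μ`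
gives `w = (μ - θ) / μ`, so every `μ` with `‖μ - θ‖ < ‖μ‖`, i.e. `θ < 2 Re μ`, is an eigenvalue,
and `B_s` multiplies its eigenvector by `∑ γ₁ ^ (s-1-k) μ ^ k = (μ ^ s - γ₁ ^ s) / (μ - γ₁)`.
For `μ = γ₁ exp (2πi / s)` this vanishes, and `Re μ = γ₁ cos (2π / s) ≥ cos (2π / 5) > θ / 2`
when `s ≥ 5`, `γ₁ ≥ 1`. The sum of this eigenvector and its conjugate (the eigenvector for
`conj μ`) is the required real sequence.
-/

open scoped BigOperators

noncomputable section

/-- Tail sum `q_l = Σ_{k ≥ l} p_k`. -/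
def qtail (p : ℕ → ℝ) (l : ℕ) : ℝ := ∑' k, p (l + k)

/-- The operator `A` on complex sequences: `(A v)(l) = (1/q_l) Σ_{k=l}^∞ p_k v(k)`. -/
def opA (p : ℕ → ℝ) (v : ℕ → ℂ) : ℕ → ℂ :=
  fun l => (1 / (qtail p l : ℂ)) * ∑' k, (p (l + k) : ℂ) * v (l + k)

/-- Membership in the domain `D(A) = {v : Σ_k p_k |v(k)| < ∞}`. -/
def memDA (p : ℕ → ℝ) (v : ℕ → ℂ) : Prop :=
  Summable fun k => p k * ‖v k‖

/-- Membership in the domain `D(A^m) = {v : A^k v ∈ D(A) for k = 0,…,m-1}`. -/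
def memDAiter (p : ℕ → ℝ) (m : ℕ) (v : ℕ → ℂ) : Prop :=
  ∀ k < m, memDA p ((opA p)^[k] v)

/-- The operator `B_s = Σ_{k=0}^{s-1} γ₁^{s-1-k} A^k`. -/
def opB (p : ℕ → ℝ) (γ₁ : ℝ) (s : ℕ) (v : ℕ → ℂ) : ℕ → ℂ :=
  fun l => ∑ k ∈ Finset.range s, (γ₁ : ℂ) ^ (s - 1 - k) * ((opA p)^[k] v) l


open Complex ComplexConjugate

section Operator

variable {p : ℕ → ℝ}

lemma memDA_iff_summable_norm_mul (hp : ∀ n, 0 ≤ p n) (v : ℕ → ℂ) :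
    memDA p v ↔ Summable fun n => ‖(p n : ℂ) * v n‖ := by
  simp only [memDA, norm_mul, Complex.norm_real, Real.norm_of_nonneg (hp _)]

lemma memDA_add (hp : ∀ n, 0 ≤ p n) {u v : ℕ → ℂ} (hu : memDA p u) (hv : memDA p v) :
    memDA p (u + v) :=
  (hu.add hv).of_nonneg_of_le (fun n => mul_nonneg (hp n) (norm_nonneg _))
    fun n => by rw [← mul_add]; exact mul_le_mul_of_nonneg_left (norm_add_le _ _) (hp n)

lemma memDA_smul (c : ℂ) {v : ℕ → ℂ} (hv : memDA p v) : memDA p (c • v) := by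
  refine (hv.mul_left ‖c‖).congr fun n => ?_
  simp only [Pi.smul_apply, smul_eq_mul, norm_mul]
  ring

lemma opA_smul (c : ℂ) (v : ℕ → ℂ) : opA p (c • v) = c • opA p v := by
  funext l
  simp only [opA, Pi.smul_apply, smul_eq_mul, mul_left_comm _ c, tsum_mul_left]

lemma opA_add (hp : ∀ n, 0 ≤ p n) {u v : ℕ → ℂ} (hu : memDA p u) (hv : memDA p v) :
    opA p (u + v) = opA p u + opA p v := by
  have tail_summable : ∀ {w : ℕ → ℂ}, memDA p w → ∀ l,
      Summable fun k => (p (l + k) : ℂ) * w (l + k) := fun hw l => by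
    simpa only [add_comm l] using
      (summable_nat_add_iff l).mpr ((memDA_iff_summable_norm_mul hp _).mp hw).of_norm
  funext l
  simp only [opA, Pi.add_apply, mul_add, (tail_summable hu l).tsum_add (tail_summable hv l)]

lemma iterate_opA_add_of_eigen (hp : ∀ n, 0 ≤ p n) {u v : ℕ → ℂ} {μ ν : ℂ}
    (hu : memDA p u) (hv : memDA p v) (hAu : opA p u = μ • u) (hAv : opA p v = ν • v) (k : ℕ) :
    (opA p)^[k] (u + v) = μ ^ k • u + ν ^ k • v := by
  induction k with
  | zero => simp
  | succ k ih =>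
    rw [Function.iterate_succ_apply', ih, opA_add hp (memDA_smul _ hu) (memDA_smul _ hv),
      opA_smul, opA_smul, hAu, hAv, smul_smul, smul_smul, pow_succ, pow_succ]

lemma opB_add_of_eigen (hp : ∀ n, 0 ≤ p n) {u v : ℕ → ℂ} {μ ν : ℂ}
    (hu : memDA p u) (hv : memDA p v) (hAu : opA p u = μ • u) (hAv : opA p v = ν • v)
    (γ : ℝ) (s : ℕ) :
    opB p γ s (u + v) =
      (∑ k ∈ Finset.range s, μ ^ k * (γ : ℂ) ^ (s - 1 - k)) • u +
        (∑ k ∈ Finset.range s, ν ^ k * (γ : ℂ) ^ (s - 1 - k)) • v := by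
  funext l
  simp only [opB, iterate_opA_add_of_eigen hp hu hv hAu hAv, Pi.add_apply, Pi.smul_apply,
    smul_eq_mul, Finset.sum_mul, ← Finset.sum_add_distrib]
  exact Finset.sum_congr rfl fun k _ => by ring

end Operator

def geomDist (θ : ℝ) (k : ℕ) : ℝ := θ * (1 - θ) ^ k

def geomEigenSeq (θ : ℝ) (μ : ℂ) (l : ℕ) : ℂ := ((μ - θ) / (μ * (1 - θ))) ^ l

section Geometric

variable {θ : ℝ} {μ : ℂ}

lemma geomDist_nonneg (hθ : θ ∈ Set.Icc (0 : ℝ) 1) (k : ℕ) : 0 ≤ geomDist θ k :=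
  mul_nonneg hθ.1 (pow_nonneg (sub_nonneg.mpr hθ.2) k)

lemma qtail_geomDist (hθ : θ ∈ Set.Ioo (0 : ℝ) 1) (l : ℕ) :
    qtail (geomDist θ) l = (1 - θ) ^ l := by
  obtain ⟨hθ0, hθ1⟩ := hθ
  simp only [qtail, geomDist, pow_add, mul_left_comm θ, tsum_mul_left]
  rw [tsum_geometric_of_lt_one (by linarith) (by linarith), sub_sub_cancel,
    mul_inv_cancel₀ hθ0.ne', mul_one]

lemma ne_zero_of_lt_two_mul_re (hθ : 0 < θ) (hμ : θ < 2 * μ.re) : μ ≠ 0 := by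
  rintro rfl
  exact absurd hμ (by simpa using hθ.le)

lemma norm_sub_ofReal_div_lt_one (hθ : 0 < θ) (hμ : θ < 2 * μ.re) : ‖(μ - θ) / μ‖ < 1 := by
  rw [norm_div, div_lt_one (norm_pos_iff.mpr (ne_zero_of_lt_two_mul_re hθ hμ)),
    ← sq_lt_sq₀ (norm_nonneg _) (norm_nonneg _), Complex.sq_norm, Complex.sq_norm,
    Complex.normSq_sub, Complex.normSq_ofReal, Complex.conj_ofReal, Complex.re_mul_ofReal]
  nlinarith

lemma geomDist_mul_geomEigenSeq (hθ : θ < 1) (hμ : μ ≠ 0) (n : ℕ) :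
    (geomDist θ n : ℂ) * geomEigenSeq θ μ n = θ * ((μ - θ) / μ) ^ n := by
  have h1θ : (1 - θ : ℂ) ≠ 0 := by exact_mod_cast (sub_pos.mpr hθ).ne'
  simp only [geomDist, geomEigenSeq]
  push_cast
  rw [div_pow, div_pow, mul_pow]
  field_simp

lemma memDA_geomDist_geomEigenSeq (hθ : θ ∈ Set.Ioo (0 : ℝ) 1) (hμ : θ < 2 * μ.re) :
    memDA (geomDist θ) (geomEigenSeq θ μ) := by
  rw [memDA_iff_summable_norm_mul (geomDist_nonneg (Set.Ioo_subset_Icc_self hθ))]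
  simp only [geomDist_mul_geomEigenSeq hθ.2 (ne_zero_of_lt_two_mul_re hθ.1 hμ), norm_mul,
    norm_pow]
  exact (summable_geometric_of_lt_one (norm_nonneg _)
    (norm_sub_ofReal_div_lt_one hθ.1 hμ)).mul_left _

lemma opA_geomDist_geomEigenSeq (hθ : θ ∈ Set.Ioo (0 : ℝ) 1) (hμ : θ < 2 * μ.re) :
    opA (geomDist θ) (geomEigenSeq θ μ) = μ • geomEigenSeq θ μ := by
  have hμ0 := ne_zero_of_lt_two_mul_re hθ.1 hμ
  have hθ0 : (θ : ℂ) ≠ 0 := by exact_mod_cast hθ.1.ne'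
  have h1θ : (1 - θ : ℂ) ≠ 0 := by exact_mod_cast (sub_pos.mpr hθ.2).ne'
  have one_sub_ratio : 1 - (μ - θ) / μ = θ / μ := by field_simp; ring
  funext l
  have tail_sum : ∑' k, (geomDist θ (l + k) : ℂ) * geomEigenSeq θ μ (l + k)
      = μ * ((μ - θ) / μ) ^ l := by
    simp only [geomDist_mul_geomEigenSeq hθ.2 hμ0, pow_add, ← mul_assoc, tsum_mul_left,
      tsum_geometric_of_norm_lt_one (norm_sub_ofReal_div_lt_one hθ.1 hμ), one_sub_ratio]
    field_simp
  rw [opA, qtail_geomDist hθ, tail_sum, Pi.smul_apply, smul_eq_mul, geomEigenSeq]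
  push_cast
  rw [div_pow, div_pow, mul_pow]
  field_simp

lemma geomEigenSeq_conj (θ : ℝ) (μ : ℂ) (n : ℕ) :
    geomEigenSeq θ (conj μ) n = conj (geomEigenSeq θ μ n) := by
  simp [geomEigenSeq, map_pow, map_div₀, Complex.conj_ofReal]

end Geometric

lemma exists_pow_eq_ofReal_pow_ne_cos_le_re {s : ℕ} (hs : 5 ≤ s) {γ : ℝ} (hγ : 1 ≤ γ) :
    ∃ μ : ℂ, μ ^ s = (γ : ℂ) ^ s ∧ μ ≠ γ ∧ Real.cos (2 * Real.pi / 5) ≤ μ.re := by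
  have hζ := Complex.isPrimitiveRoot_exp s (by omega)
  refine ⟨γ * exp (2 * Real.pi * I / s), by rw [mul_pow, hζ.pow_eq_one, mul_one], fun h => ?_, ?_⟩
  · have hγ0 : (γ : ℂ) ≠ 0 := by exact_mod_cast (show γ ≠ 0 by linarith)
    exact hζ.ne_one (by omega) (mul_left_cancel₀ hγ0 (h.trans (mul_one _).symm))
  · have hs5 : (5 : ℝ) ≤ s := by exact_mod_cast hs
    have hπ := Real.pi_pos
    have hcos5 : 0 ≤ Real.cos (2 * Real.pi / 5) :=
      Real.cos_nonneg_of_neg_pi_div_two_le_of_le (by linarith) (by linarith)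
    have hcos : Real.cos (2 * Real.pi / 5) ≤ Real.cos (2 * Real.pi / s) :=
      Real.cos_le_cos_of_nonneg_of_le_pi (by positivity) (by linarith)
        (div_le_div_of_nonneg_left (by positivity) (by norm_num) hs5)
    have hexp : 2 * Real.pi * I / s = ((2 * Real.pi / s : ℝ) : ℂ) * I := by push_cast; ring
    rw [hexp, Complex.re_ofReal_mul, Complex.exp_ofReal_mul_I_re]
    nlinarith

/-- For `s ≥ 5`, `γ₁ ≥ 1` and the geometric distribution with parameter `θ ∈ (0,1)`,
`θ < 2 cos(2π/5)`, there is a nonzero real sequence `z ∈ D(A^{s-1}) ∩ ℝ^ℕ` killed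
by `B_s`; in particular `B_s` is not injective on `D(A^{s-1}) ∩ ℝ^ℕ`. -/
theorem opB_not_injective_on_reals_of_five_le
    (θ : ℝ) (hθ : θ ∈ Set.Ioo (0 : ℝ) 1) (hθ5 : θ < 2 * Real.cos (2 * Real.pi / 5))
    (s : ℕ) (hs : 5 ≤ s) (γ₁ : ℝ) (hγ₁ : 1 ≤ γ₁) :
    ∃ z : ℕ → ℂ, z ≠ 0 ∧ (∀ k, (z k).im = 0) ∧
      memDAiter (fun k => θ * (1 - θ) ^ k) (s - 1) z ∧
      opB (fun k => θ * (1 - θ) ^ k) γ₁ s z = 0 := by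
  rw [show (fun k => θ * (1 - θ) ^ k) = geomDist θ from rfl]
  obtain ⟨μ, hμs, hμγ, hμre⟩ := exists_pow_eq_ofReal_pow_ne_cos_le_re hs hγ₁
  have hμ : θ < 2 * μ.re := by linarith
  have hμ' : θ < 2 * (conj μ).re := by rwa [Complex.conj_re]
  have hp := geomDist_nonneg (Set.Ioo_subset_Icc_self hθ)
  have hu := memDA_geomDist_geomEigenSeq hθ hμ
  have hv := memDA_geomDist_geomEigenSeq hθ hμ'
  have hAu := opA_geomDist_geomEigenSeq hθ hμ
  have hAv := opA_geomDist_geomEigenSeq hθ hμ'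
  have root_sum_eq_zero : ∀ ν : ℂ, ν ^ s = (γ₁ : ℂ) ^ s → ν ≠ γ₁ →
      ∑ k ∈ Finset.range s, ν ^ k * (γ₁ : ℂ) ^ (s - 1 - k) = 0 := fun ν hνs hνγ => by
    rw [geom₂_sum hνγ, hνs, sub_self, zero_div]
  refine ⟨geomEigenSeq θ μ + geomEigenSeq θ (conj μ), fun h => ?_, fun k => ?_,
    fun k _ => ?_, ?_⟩
  · simpa [geomEigenSeq] using congrFun h 0
  · simp [geomEigenSeq_conj]
  · rw [iterate_opA_add_of_eigen hp hu hv hAu hAv]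
    exact memDA_add hp (memDA_smul _ hu) (memDA_smul _ hv)
  · rw [opB_add_of_eigen hp hu hv hAu hAv, root_sum_eq_zero μ hμs hμγ,
      root_sum_eq_zero _ (by rw [← map_pow, hμs, map_pow, Complex.conj_ofReal])
        (by rwa [Ne, ← Complex.conj_ofReal, (starRingEnd ℂ).injective.eq_iff]),
      zero_smul, zero_smul, add_zero]
end
end

section
/- Let λ ∈ ℂ, λ ≠ 0, and let x ∈ D(A) satisfy A x = λ x. Then for every i ≥ 0 one has x(i+1) = ((λ q_i − p_i)/(λ q_{i+1})) x(i); consequently x(k) = b_k(λ)·x(0) for every k ≥ 1, where b_k(λ) = ∏_{i=0}^{k−1} (λ q_i − p_i)/(λ q_{i+1}). In particular, if x(0) = 0 then x = 0. -/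
open scoped BigOperators

noncomputable section

/-- `b_k(λ) = ∏_{i=0}^{k-1} (λ q_i - p_i)/(λ q_{i+1})`. -/
def bcoef (p : ℕ → ℝ) (lam : ℂ) (k : ℕ) : ℂ :=
  ∏ i ∈ Finset.range k, (lam * qtail p i - p i) / (lam * qtail p (i + 1))

/-!
Write `S_l = Σ_{k ≥ l} p_k x(k)`. The eigenvalue equation says `S_l = λ q_l x(l)`, while peeling
off the first term of the series gives `S_l = p_l x(l) + S_{l+1}`. Comparing the two at `l = i`
and `l = i + 1` yields `λ q_i x(i) = p_i x(i) + λ q_{i+1} x(i+1)`, which can be solved for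
`x(i+1)` because `λ q_{i+1} ≠ 0`. Iterating the recursion gives `x(k) = b_k(λ) x(0)`.
-/

section TailSums

variable {G : Type*} [AddCommGroup G] [TopologicalSpace G] [IsTopologicalAddGroup G]
  {f : ℕ → G}

theorem Summable.comp_add_left (hf : Summable f) (l : ℕ) : Summable fun k => f (l + k) := by
  simpa only [add_comm] using (summable_nat_add_iff l).2 hf

theorem Summable.tsum_add_left_eq_add_tsum_succ [T2Space G] (hf : Summable f) (l : ℕ) :
    ∑' k, f (l + k) = f l + ∑' k, f (l + 1 + k) := by
  rw [(hf.comp_add_left l).tsum_eq_zero_add, add_zero]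
  simp only [add_right_comm l, add_assoc]

end TailSums

theorem eq_prod_range_mul_of_succ_eq_mul {M : Type*} [CommMonoid M] {x c : ℕ → M}
    (h : ∀ i, x (i + 1) = c i * x i) (k : ℕ) : x k = (∏ i ∈ Finset.range k, c i) * x 0 := by
  induction k with
  | zero => simp
  | succ k ih => rw [h, ih, Finset.prod_range_succ, mul_comm _ (c k), mul_assoc]

variable {p : ℕ → ℝ} {x : ℕ → ℂ} {lam : ℂ}

theorem qtail_pos (hp : ∀ k, 0 < p k) (hps : Summable p) (l : ℕ) : 0 < qtail p l :=
  (hps.comp_add_left l).tsum_pos (fun _ => (hp _).le) 0 (hp _)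

theorem memDA.summable_mul (hp : ∀ k, 0 ≤ p k) (hx : memDA p x) :
    Summable fun k => (p k : ℂ) * x k :=
  Summable.of_norm <| hx.congr fun k => by
    rw [norm_mul, Complex.norm_real, Real.norm_of_nonneg (hp k)]

theorem tsum_tail_eq_of_opA_apply_eq {l : ℕ} (hq : qtail p l ≠ 0)
    (h : opA p x l = lam * x l) :
    ∑' k, (p (l + k) : ℂ) * x (l + k) = lam * qtail p l * x l := by
  have hq' : (qtail p l : ℂ) ≠ 0 := Complex.ofReal_ne_zero.2 hq
  rw [opA, one_div, inv_mul_eq_iff_eq_mul₀ hq'] at h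
  rw [h]
  ring

theorem eigenvector_succ (hp : ∀ k, 0 ≤ p k) (hq : ∀ l, qtail p l ≠ 0) (hlam : lam ≠ 0)
    (hx : memDA p x) (heig : opA p x = fun l => lam * x l) (i : ℕ) :
    x (i + 1) = ((lam * qtail p i - p i) / (lam * qtail p (i + 1))) * x i := by
  have hS := (hx.summable_mul hp).tsum_add_left_eq_add_tsum_succ i
  rw [tsum_tail_eq_of_opA_apply_eq (hq i) (congrFun heig i),
    tsum_tail_eq_of_opA_apply_eq (hq (i + 1)) (congrFun heig (i + 1))] at hS
  have hden : lam * (qtail p (i + 1) : ℂ) ≠ 0 := mul_ne_zero hlam (Complex.ofReal_ne_zero.2 (hq _))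
  rw [div_mul_eq_mul_div, eq_div_iff hden]
  linear_combination -hS

/-- If `x ∈ D(A)` is an eigenvector of `A` for a nonzero eigenvalue `λ`, then
`x(i+1) = ((λ q_i − p_i)/(λ q_{i+1})) x(i)` for all `i`, hence `x(k) = b_k(λ) x(0)`
for `k ≥ 1`; in particular `x(0) = 0` forces `x = 0`. -/
theorem eigenvector_recursion
    (p : ℕ → ℝ) (hp : ∀ k, 0 < p k) (hsum : HasSum p 1)
    (lam : ℂ) (hlam : lam ≠ 0)
    (x : ℕ → ℂ) (hx : memDA p x) (heig : opA p x = fun l => lam * x l) :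
    (∀ i : ℕ, x (i + 1) = ((lam * qtail p i - p i) / (lam * qtail p (i + 1))) * x i) ∧
      (∀ k : ℕ, 1 ≤ k → x k = bcoef p lam k * x 0) ∧
      (x 0 = 0 → x = 0) := by
  have hrec := eigenvector_succ (fun k => (hp k).le)
    (fun l => (qtail_pos hp hsum.summable l).ne') hlam hx heig
  have hprod : ∀ k, x k = bcoef p lam k * x 0 := eq_prod_range_mul_of_succ_eq_mul hrec
  refine ⟨hrec, fun k _ => hprod k, fun h0 => funext fun k => ?_⟩
  rw [hprod k, h0, mul_zero, Pi.zero_apply]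
end
end
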